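/- On the group 𝐏, the measure dm_l(x,t,ρ,u,v) = ρ^{−6} dx dt dρ du dv is invariant under all left translations of 𝐏, and the measure dm_r(x,t,ρ,u,v) = ρ^{−1} dx dt dρ du dv is invariant under all right translations of 𝐏; since these measures are not proportional, 𝐏 is non-unimodular. -/

import Mathlib

noncomputable section

open MeasureTheory Quaternion Complex RealInnerProductSpace

/- Measure-theoretic instances for the quaternions. -/
noncomputable instance : MeasurableSpace ℍ[ℝ] := borel _
instance : BorelSpace ℍ[ℝ] := ⟨rfl⟩

/-- The purely imaginary quaternions `Im ℍ ≅ ℝ³`. -/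
def ImH : Submodule ℝ ℍ[ℝ] where
  carrier := {q | q.re = 0}
  add_mem' := by intro a b ha hb; simp_all [Set.mem_setOf_eq]
  zero_mem' := by simp
  smul_mem' := by intro c q hq; simp_all [Set.mem_setOf_eq]

noncomputable instance : MeasurableSpace ↥ImH := borel _
instance : BorelSpace ↥ImH := ⟨rfl⟩

/-- the imaginary part of a quaternion, as an element of `Im ℍ`. -/
def imPart (q : ℍ[ℝ]) : ↥ImH := ⟨q.im, by show q.im.re = 0; simp⟩

/-- The quaternion Heisenberg group `𝒬 = ℍ × Im ℍ` (as a set/measure space). -/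
abbrev QH := ℍ[ℝ] × ↥ImH

/-- Group law of `𝒬` : `(x,t)(x′,t′) = (x + x′, t + t′ − 2 Im( x̄′ x ))`. -/
def Qmul (p q : QH) : QH :=
  (p.1 + q.1, p.2 + q.2 - (2 : ℝ) • imPart (star q.1 * p.1))

/-- Inverse in `𝒬`. -/
def Qinv (p : QH) : QH := (-p.1, -p.2)

lemma sandwich_re (v t : ℍ[ℝ]) (ht : t.re = 0) : (v * t * star v).re = 0 := by
  simp [Quaternion.re_mul, Quaternion.imI_mul, Quaternion.imJ_mul, Quaternion.imK_mul,
    Quaternion.re_star, Quaternion.imI_star, Quaternion.imJ_star, Quaternion.imK_star, ht]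
  ring

/-- `t ↦ v t v̄` as a map of `Im ℍ`. -/
def sandwich (v : ℍ[ℝ]) (t : ↥ImH) : ↥ImH := ⟨v * (t : ℍ[ℝ]) * star v, sandwich_re v t t.2⟩

/-- `Sp(1)`, the unit quaternions. -/
abbrev Sp1 : Type := Metric.sphere (0 : ℍ[ℝ]) 1

lemma Sp1.norm_eq (u : Sp1) : ‖(u : ℍ[ℝ])‖ = 1 := mem_sphere_zero_iff_norm.mp u.2

def sp1Mul (u v : Sp1) : Sp1 :=
  ⟨(u : ℍ[ℝ]) * (v : ℍ[ℝ]), by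
    simp [mem_sphere_zero_iff_norm, norm_mul, Sp1.norm_eq u, Sp1.norm_eq v]⟩

def sp1One : Sp1 := ⟨1, by simp [mem_sphere_zero_iff_norm]⟩

/-- The (two-fold cover of the) affine automorphism group `𝐏` of `𝒬`. -/
abbrev P := ℍ[ℝ] × ↥ImH × {r : ℝ // 0 < r} × Sp1 × Sp1

/-- Group law of `𝐏`. -/
def Pmul (g h : P) : P :=
  ⟨g.1 + Real.sqrt (g.2.2.1 : ℝ) • ((g.2.2.2.1 : ℍ[ℝ]) * h.1 * star (g.2.2.2.2 : ℍ[ℝ])),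
   g.2.1 + (g.2.2.1 : ℝ) • sandwich (g.2.2.2.2 : ℍ[ℝ]) h.2.1
     - (2 * Real.sqrt (g.2.2.1 : ℝ)) •
        imPart ((g.2.2.2.2 : ℍ[ℝ]) * star h.1 * star (g.2.2.2.1 : ℍ[ℝ]) * g.1),
   ⟨(g.2.2.1 : ℝ) * (h.2.2.1 : ℝ), mul_pos g.2.2.1.2 h.2.2.1.2⟩,
   sp1Mul g.2.2.2.1 h.2.2.2.1, sp1Mul g.2.2.2.2 h.2.2.2.2⟩

/-- The identity of `𝐏`. -/
def Pone : P := ⟨0, 0, ⟨1, one_pos⟩, sp1One, sp1One⟩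

/-- The action of `𝐏` on `𝒬`. -/
def Pact (g : P) (p : QH) : QH :=
  ⟨g.1 + Real.sqrt (g.2.2.1 : ℝ) • ((g.2.2.2.1 : ℍ[ℝ]) * p.1 * star (g.2.2.2.2 : ℍ[ℝ])),
   g.2.1 + (g.2.2.1 : ℝ) • sandwich (g.2.2.2.2 : ℍ[ℝ]) p.2
     - (2 * Real.sqrt (g.2.2.1 : ℝ)) •
        imPart ((g.2.2.2.2 : ℍ[ℝ]) * star p.1 * star (g.2.2.2.1 : ℍ[ℝ]) * g.1)⟩

/-- The unitary representation `U` of `𝐏` on `L²(𝒬)`. -/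
def Uop (g : P) (f : QH → ℂ) : QH → ℂ := fun z =>
  (((g.2.2.1 : ℝ) ^ (-(5 : ℝ)/2) : ℝ) : ℂ) *
    f ((Real.sqrt (g.2.2.1 : ℝ))⁻¹ •
          (star (g.2.2.2.1 : ℍ[ℝ]) * (z.1 - g.1) * (g.2.2.2.2 : ℍ[ℝ])),
       ((g.2.2.1 : ℝ))⁻¹ •
          sandwich (star (g.2.2.2.2 : ℍ[ℝ]))
            (z.2 - g.2.1 + (2 : ℝ) • imPart (star z.1 * g.1)))

/-- The continuous wavelet transform `W_φ f (g) = ⟨f, U(g)φ⟩_{L²(𝒬)}`. -/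
def Wav (φ f : QH → ℂ) (g : P) : ℂ :=
  ∫ z : QH, f z * (starRingEnd ℂ) (Uop g φ z)

/-- Group convolution on `𝒬`. -/
def Qconv (f g : QH → ℂ) : QH → ℂ := fun z =>
  ∫ w : QH, f w * g (Qmul (Qinv w) z)

/-- dilation `φ_ρ(x,t) = ρ^{−5} φ(x/√ρ, t/ρ)`. -/
def dilateF (ρ : ℝ) (φ : QH → ℂ) : QH → ℂ := fun z =>
  ((ρ ^ (-5 : ℤ) : ℝ) : ℂ) * φ ((Real.sqrt ρ)⁻¹ • z.1, ρ⁻¹ • z.2)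

/-- rotation `φ_{u,v}(x,t) = φ(ū x v, v̄ t v)`. -/
def rotF (u v : Sp1) (φ : QH → ℂ) : QH → ℂ := fun z =>
  φ (star (u : ℍ[ℝ]) * z.1 * (v : ℍ[ℝ]), sandwich (star (v : ℍ[ℝ])) z.2)

/-- `φ̃(x,t) = conj (φ(−x,−t))`. -/
def tildeF (φ : QH → ℂ) : QH → ℂ := fun z => (starRingEnd ℂ) (φ (-z.1, -z.2))

/-- The Radon transform `ℛf(x,t) = ∫_ℍ f(y, t − 2 Im(ȳ x)) dy`. -/
def Radon (f : QH → ℂ) : QH → ℂ := fun z =>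
  ∫ y : ℍ[ℝ], f (y, z.2 - (2 : ℝ) • imPart (star y * z.1))

/-- Partial Fourier transform in the central variable. -/
def F2 (f : QH → ℂ) : QH → ℂ := fun p =>
  ∫ t : ↥ImH, f (p.1, t) * Complex.exp (Complex.I * ((⟪t, p.2⟫ : ℝ) : ℂ))

/-- Full (Euclidean) Fourier transform on `𝒬 ≅ ℝ⁴ × ℝ³`. -/
def FF (f : QH → ℂ) : QH → ℂ := fun p =>
  ∫ z : QH, f z * Complex.exp (Complex.I * ((⟪z.1, p.1⟫ : ℝ) : ℂ)) *
    Complex.exp (Complex.I * ((⟪z.2, p.2⟫ : ℝ) : ℂ))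

/-- Inverse of the partial Fourier transform `ℱ₂`. -/
def F2inv (f : QH → ℂ) : QH → ℂ := fun z =>
  (((2 * Real.pi) ^ (-3 : ℤ) : ℝ) : ℂ) *
    ∫ a : ↥ImH, f (z.1, a) * Complex.exp (-Complex.I * ((⟪z.2, a⟫ : ℝ) : ℂ))

/-- Inverse of the full Fourier transform `ℱ`. -/
def FFinv (f : QH → ℂ) : QH → ℂ := fun z =>
  (((2 * Real.pi) ^ (-7 : ℤ) : ℝ) : ℂ) *
    ∫ p : QH, f p * Complex.exp (-Complex.I * ((⟪z.1, p.1⟫ : ℝ) : ℂ)) *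
      Complex.exp (-Complex.I * ((⟪z.2, p.2⟫ : ℝ) : ℂ))

/-- The mixing map `Ψ(f)(x,t) = f(−2 x t, t)`. -/
def Psi (f : QH → ℂ) : QH → ℂ := fun z =>
  f ((-2 : ℝ) • (z.1 * (z.2 : ℍ[ℝ])), z.2)

open Classical in
/-- The inverse mixing map. -/
def PsiInv (f : QH → ℂ) : QH → ℂ := fun z =>
  if z.2 = 0 then 0 else
    f ((2 * ‖(z.2 : ℍ[ℝ])‖ ^ 2)⁻¹ • (z.1 * (z.2 : ℍ[ℝ])), z.2)

/-- A function is a Schwartz function. -/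
def IsSchwartz (f : QH → ℂ) : Prop := ∃ g : SchwartzMap QH ℂ, ⇑g = f

/-- The Semyanistyi–Lizorkin space `𝒮^*(𝒬)`: Schwartz functions all of whose
derivatives in the central variable vanish at `t = 0`. -/
def SstarUpper : Set (QH → ℂ) :=
  {f | IsSchwartz f ∧
    ∀ (x : ℍ[ℝ]) (n : ℕ), iteratedFDeriv ℝ n (fun t : ↥ImH => f (x, t)) 0 = 0}

/-- The Semyanistyi–Lizorkin space `𝒮_*(𝒬)`: Schwartz functions all of whose
moments in the central variable vanish. -/
def SstarLower : Set (QH → ℂ) :=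
  {f | IsSchwartz f ∧
    ∀ (x : ℍ[ℝ]) (s : ℕ × ℕ × ℕ),
      ∫ t : ↥ImH, f (x, t) *
        ((((t : ℍ[ℝ]).imI ^ s.1 * (t : ℍ[ℝ]).imJ ^ s.2.1 * (t : ℍ[ℝ]).imK ^ s.2.2 : ℝ)) : ℂ) = 0}

/-- basis vectors of `Im ℍ` -/
def eI : ↥ImH := ⟨⟨0,1,0,0⟩, rfl⟩
def eJ : ↥ImH := ⟨⟨0,0,1,0⟩, rfl⟩
def eK : ↥ImH := ⟨⟨0,0,0,1⟩, rfl⟩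

/-- partial derivative in the central variable along `v ∈ Im ℍ`. -/
def Dt (v : ↥ImH) (f : QH → ℂ) : QH → ℂ := fun z => fderiv ℝ f z (0, v)

/-- `𝓛 = −(1/π²)(∂²/∂t₁² + ∂²/∂t₂² + ∂²/∂t₃²)` acting in the central variable. -/
def Lop (f : QH → ℂ) : QH → ℂ := fun z =>
  -(((Real.pi ^ 2)⁻¹ : ℝ) : ℂ) * (Dt eI (Dt eI f) z + Dt eJ (Dt eJ f) z + Dt eK (Dt eK f) z)


/-- the normalized (uniform) Haar measure `du` on `Sp(1)`, i.e. the normalized surface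
measure on the unit sphere of `ℍ`. -/
def sphereMeasure : Measure Sp1 :=
  (((volume : Measure ℍ[ℝ]).toSphere) Set.univ)⁻¹ • (volume : Measure ℍ[ℝ]).toSphere

/-- the measure `ρⁿ dρ` on `(0,∞)`. -/
def rhoMeasure (n : ℤ) : Measure {r : ℝ // 0 < r} :=
  ((volume : Measure ℝ).comap Subtype.val).withDensity fun r => ENNReal.ofReal ((r : ℝ) ^ n)

/-- the left Haar measure `dm_l = ρ^{−6} dx dt dρ du dv` on `𝐏`. -/
def ml : Measure P :=
  (volume : Measure ℍ[ℝ]).prod ((volume : Measure ↥ImH).prod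
    ((rhoMeasure (-6)).prod (sphereMeasure.prod sphereMeasure)))

/-- the right Haar measure `dm_r = ρ^{−1} dx dt dρ du dv` on `𝐏`. -/
def mr : Measure P :=
  (volume : Measure ℍ[ℝ]).prod ((volume : Measure ↥ImH).prod
    ((rhoMeasure (-1)).prod (sphereMeasure.prod sphereMeasure)))

/-!
Both one-sided translations of `𝐏` factor into two kinds of maps. A dilation-rotation
`(x, t, r, a, b) ↦ (√ρ u x v̄, ρ v t v̄, ρ r, u a, v b)` (or `(x, t, r ρ, a u, b v)` on the right)
is a product map: on each factor it rescales the measure `dx dt ρⁿ dρ du dv`, by `ρ⁻²` on `ℍ`,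
`ρ⁻³` on `Im ℍ` and `ρ^{-(n+1)}` on `(0, ∞)`, while unit quaternions act isometrically on the
spheres. What is left is a shear `(x, t, w) ↦ (x + a(w), t + b(w, x), w)`, which preserves
`dx dt ⊗ κ` by Fubini and translation invariance. So a left translation by `g` multiplies the
measure by `ρ_g^{-(n+6)}` and a right translation by `ρ_g^{-(n+1)}`: `n = -6` gives `m_l` and
`n = -1` gives `m_r`. If `m_l = c • m_r`, the left translation by the pure dilation `ρ = 2` fixes
`m_l` and multiplies `m_r` by `2⁻⁵`, so `m_l = 2⁻⁵ • m_l`, which fails on a box of finite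
positive measure.
-/
open Metric Set
open scoped Pointwise ENNReal

local notation "ℝ₊" => {r : ℝ // 0 < r}

def LinearIsometryEquiv.sphereMap {E : Type*} [NormedAddCommGroup E] [NormedSpace ℝ E]
    (e : E ≃ₗᵢ[ℝ] E) : sphere (0 : E) 1 → sphere (0 : E) 1 :=
  Subtype.map e fun x hx => by
    rwa [mem_sphere_zero_iff_norm, e.norm_map, ← mem_sphere_zero_iff_norm]

namespace MeasureTheory

section Fiberwise

variable {α β γ : Type*} [MeasurableSpace α] [MeasurableSpace β] [MeasurableSpace γ]

theorem MeasurePreserving.fiberwise_fst {μ : Measure α} {ν : Measure β} [SFinite μ] [SFinite ν]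
    {g : β → α → α} (hg : Measurable (Function.uncurry g))
    (hgμ : ∀ y, MeasurePreserving (g y) μ μ) :
    MeasurePreserving (fun p : α × β => (g p.2 p.1, p.2)) (μ.prod ν) (μ.prod ν) :=
  (Measure.measurePreserving_swap.comp
    ((MeasurePreserving.id ν).skew_product hg (ae_of_all _ fun y => (hgμ y).map_eq))).comp
    Measure.measurePreserving_swap

theorem measurePreserving_add_shear [AddGroup α] [MeasurableAdd₂ α] [AddGroup β]
    [MeasurableAdd₂ β] (μ : Measure α) (ν : Measure β) (κ : Measure γ) [SFinite μ] [SFinite ν]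
    [SFinite κ] [μ.IsAddRightInvariant] [ν.IsAddRightInvariant] {a : γ → α} {b : γ → α → β}
    (ha : Measurable a) (hb : Measurable fun p : γ × α => b p.1 p.2) :
    MeasurePreserving (fun p : α × β × γ => (p.1 + a p.2.2, p.2.1 + b p.2.2 p.1, p.2.2))
      (μ.prod (ν.prod κ)) (μ.prod (ν.prod κ)) := by
  have shear_fst : MeasurePreserving (fun p : α × β × γ => (p.1 + a p.2.2, p.2))
      (μ.prod (ν.prod κ)) (μ.prod (ν.prod κ)) :=
    MeasurePreserving.fiberwise_fst (g := fun (w : β × γ) x => x + a w.2) (by fun_prop)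
      fun w => measurePreserving_add_right μ (a w.2)
  have shear_snd : MeasurePreserving (fun p : α × β × γ => (p.1, p.2.1 + b p.2.2 p.1, p.2.2))
      (μ.prod (ν.prod κ)) (μ.prod (ν.prod κ)) :=
    (MeasurePreserving.id μ).skew_product (by fun_prop) <| ae_of_all _ fun x =>
      (MeasurePreserving.fiberwise_fst (g := fun w t => t + b w x) (by fun_prop)
        fun w => measurePreserving_add_right ν (b w x)).map_eq
  exact shear_fst.comp shear_snd

theorem MeasurePreserving.prodMap_smul {δ : Type*} [MeasurableSpace δ] {μa : Measure α}
    {μb : Measure β} {μc : Measure γ} {μd : Measure δ} [SFinite μa] [SFinite μb] [SFinite μc]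
    [SFinite μd] {f : α → β} {g : γ → δ} {c d : ℝ≥0∞} (hf : MeasurePreserving f μa (c • μb))
    (hg : MeasurePreserving g μc (d • μd)) :
    MeasurePreserving (Prod.map f g) (μa.prod μc) ((c * d) • μb.prod μd) := by
  have := hf.prod hg
  rwa [Measure.prod_smul_left, Measure.prod_smul_right, smul_smul] at this

end Fiberwise

theorem MeasurePreserving.smul_linearIsometryEquiv {E : Type*} [NormedAddCommGroup E]
    [InnerProductSpace ℝ E] [FiniteDimensional ℝ E] [MeasurableSpace E] [BorelSpace E]
    (e : E ≃ₗᵢ[ℝ] E) {c : ℝ} (hc : 0 < c) :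
    MeasurePreserving (fun x => c • e x) volume
      (ENNReal.ofReal (c ^ Module.finrank ℝ E)⁻¹ • volume) := by
  refine ⟨by fun_prop, ?_⟩
  change Measure.map ((c • ·) ∘ e) volume = _
  rw [← Measure.map_map (by fun_prop) e.continuous.measurable, e.measurePreserving.map_eq,
    Measure.map_addHaar_smul _ hc.ne', abs_of_pos (by positivity)]

theorem Measure.measurePreserving_sphereMap_toSphere {E : Type*} [NormedAddCommGroup E]
    [NormedSpace ℝ E] [MeasurableSpace E] [BorelSpace E] {μ : Measure E}
    (e : E ≃ₗᵢ[ℝ] E) (he : MeasurePreserving e μ μ) :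
    MeasurePreserving e.sphereMap μ.toSphere μ.toSphere := by
  have hm : Measurable e.sphereMap :=
    (e.continuous.measurable.comp measurable_subtype_coe).subtype_mk
  refine ⟨hm, Measure.ext fun s hs => ?_⟩
  rw [Measure.map_apply hm hs, Measure.toSphere_apply' _ (hm hs), Measure.toSphere_apply' _ hs]
  congr 1
  have hcone : Ioo (0 : ℝ) 1 • ((↑) '' (e.sphereMap ⁻¹' s) : Set E)
      = e ⁻¹' (Ioo (0 : ℝ) 1 • ((↑) '' s)) := by
    ext x
    simp only [Set.mem_smul, mem_image, mem_preimage, Subtype.exists,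
      LinearIsometryEquiv.sphereMap, Subtype.map]
    constructor
    · rintro ⟨r, hr, _, ⟨y, hy, hys, rfl⟩, rfl⟩
      exact ⟨r, hr, e y, ⟨e y, (e.sphereMap ⟨y, hy⟩).2, hys, rfl⟩, by simp⟩
    · rintro ⟨r, hr, _, ⟨y, hy, hys, rfl⟩, hx⟩
      refine ⟨r, hr, e.symm y, ⟨e.symm y, by simpa using hy, by simpa using hys, rfl⟩, ?_⟩
      apply e.injective
      simpa using hx
  rw [hcone, he.measure_preimage_emb e.toHomeomorph.measurableEmbedding]

end MeasureTheory

theorem lintegral_preimage_mul_left_zpow (n : ℤ) {c : ℝ} (hc : 0 < c) {A : Set ℝ}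
    (hA : MeasurableSet A) :
    ∫⁻ x in (c * ·) ⁻¹' A, ENNReal.ofReal (x ^ n)
      = ENNReal.ofReal (c ^ (-(n + 1))) * ∫⁻ x in A, ENNReal.ofReal (x ^ n) := by
  have hf : Measurable fun y : ℝ => ENNReal.ofReal ((c⁻¹ * y) ^ n) := by measurability
  calc ∫⁻ x in (c * ·) ⁻¹' A, ENNReal.ofReal (x ^ n)
      = ∫⁻ x in (c * ·) ⁻¹' A, ENNReal.ofReal ((c⁻¹ * (c * x)) ^ n) := by
        simp only [inv_mul_cancel_left₀ hc.ne']
    _ = ∫⁻ y in A, ENNReal.ofReal ((c⁻¹ * y) ^ n) ∂(Measure.map (c * ·) volume) :=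
        (setLIntegral_map hA hf (measurable_const_mul c)).symm
    _ = ENNReal.ofReal c⁻¹ * ∫⁻ y in A, ENNReal.ofReal (c⁻¹ ^ n) * ENNReal.ofReal (y ^ n) := by
        rw [Real.map_volume_mul_left hc.ne', Measure.restrict_smul, lintegral_smul_measure,
          abs_of_pos (inv_pos.mpr hc), smul_eq_mul]
        simp_rw [mul_zpow, ENNReal.ofReal_mul (zpow_nonneg (inv_nonneg.mpr hc.le) n)]
    _ = ENNReal.ofReal (c ^ (-(n + 1))) * ∫⁻ x in A, ENNReal.ofReal (x ^ n) := by
        rw [lintegral_const_mul' _ _ ENNReal.ofReal_ne_top, ← mul_assoc,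
          ← ENNReal.ofReal_mul (inv_nonneg.mpr hc.le), neg_add, zpow_add₀ hc.ne', zpow_neg_one,
          zpow_neg, inv_zpow, mul_comm c⁻¹]

theorem measurableEmbedding_pos_val : MeasurableEmbedding (Subtype.val : ℝ₊ → ℝ) :=
  MeasurableEmbedding.subtype_coe measurableSet_Ioi

instance : SigmaFinite ((volume : Measure ℝ).comap (Subtype.val : ℝ₊ → ℝ)) :=
  SigmaFinite.of_map _ measurable_subtype_coe.aemeasurable <| by
    rw [measurableEmbedding_pos_val.map_comap]
    infer_instance

instance (n : ℤ) : SigmaFinite (rhoMeasure n) := by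
  unfold rhoMeasure
  infer_instance

theorem measurePreserving_rhoMeasure_mul_left (n : ℤ) (c : ℝ₊) :
    MeasurePreserving (c * ·) (rhoMeasure n)
      (ENNReal.ofReal ((c : ℝ) ^ (-(n + 1))) • rhoMeasure n) := by
  have hm : Measurable (c * · : ℝ₊ → ℝ₊) :=
    (measurable_const.mul measurable_subtype_coe).subtype_mk
  refine ⟨hm, Measure.ext fun s hs => ?_⟩
  have himage : Subtype.val '' ((c * ·) ⁻¹' s) = ((c : ℝ) * ·) ⁻¹' (Subtype.val '' s) := by
    ext x
    constructor
    · rintro ⟨r, hr, rfl⟩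
      exact ⟨_, hr, rfl⟩
    · rintro ⟨r, hr, hrx : (r : ℝ) = c * x⟩
      have hx : 0 < x := pos_of_mul_pos_right (hrx ▸ r.2) c.2.le
      exact ⟨⟨x, hx⟩, by rwa [mem_preimage, show c * ⟨x, hx⟩ = r from Subtype.ext hrx.symm], rfl⟩
  have hsub (t : Set ℝ₊) : ∫⁻ r in t, ENNReal.ofReal ((r : ℝ) ^ n) ∂(volume.comap Subtype.val)
      = ∫⁻ x in Subtype.val '' t, ENNReal.ofReal (x ^ n) :=
    setLIntegral_subtype (s := {x : ℝ | 0 < x}) measurableSet_Ioi t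
      (fun x : ℝ => ENNReal.ofReal (x ^ n))
  rw [Measure.map_apply hm hs, Measure.smul_apply, smul_eq_mul, rhoMeasure,
    withDensity_apply _ (hm hs), withDensity_apply _ hs, hsub, hsub, himage,
    lintegral_preimage_mul_left_zpow n c.2 (measurableEmbedding_pos_val.measurableSet_image' hs)]

theorem rhoMeasure_Icc_ne_zero_ne_top (n : ℤ) :
    rhoMeasure n (Subtype.val ⁻¹' Icc 1 2) ≠ 0 ∧ rhoMeasure n (Subtype.val ⁻¹' Icc 1 2) ≠ ∞ := by
  have hsub : Icc (1 : ℝ) 2 ⊆ range (Subtype.val : ℝ₊ → ℝ) := fun x hx =>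
    ⟨⟨x, one_pos.trans_le hx.1⟩, rfl⟩
  have hK : (volume.comap (Subtype.val : ℝ₊ → ℝ)) (Subtype.val ⁻¹' Icc 1 2) = 1 := by
    rw [measurableEmbedding_pos_val.comap_apply, image_preimage_eq_of_subset hsub,
      Real.volume_Icc]
    norm_num
  have hpos (r : ℝ₊) : ENNReal.ofReal ((r : ℝ) ^ n) ≠ 0 :=
    (ENNReal.ofReal_pos.mpr (zpow_pos r.2 n)).ne'
  have hcont : Continuous fun r : ℝ₊ => (r : ℝ) ^ n :=
    continuous_subtype_val.zpow₀ n fun r => Or.inl r.2.ne'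
  refine ⟨?_, ?_⟩
  · rw [rhoMeasure, Ne, withDensity_apply_eq_zero' hcont.measurable.ennreal_ofReal.aemeasurable]
    simp [hpos, hK]
  · rw [rhoMeasure, withDensity_apply _ (measurable_subtype_coe measurableSet_Icc)]
    -- `ENNReal.ofReal r` is `↑r.toNNReal` by definition.
    refine (setLIntegral_lt_top_of_isCompact (by simp [hK]) ?_
      (continuous_real_toNNReal.comp hcont)).ne
    rw [Subtype.isCompact_iff, image_preimage_eq_of_subset hsub]
    exact isCompact_Icc

@[fun_prop]
theorem continuous_imPart : Continuous imPart :=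
  Quaternion.continuous_im.subtype_mk _

@[fun_prop]
theorem Continuous.sandwich {X : Type*} [TopologicalSpace X] {f : X → ℍ[ℝ]} {g : X → ImH}
    (hf : Continuous f) (hg : Continuous g) : Continuous fun x => sandwich (f x) (g x) :=
  ((hf.mul (continuous_subtype_val.comp hg)).mul hf.star).subtype_mk _

theorem imPart_smul (c : ℝ) (q : ℍ[ℝ]) : imPart (c • q) = c • imPart q :=
  Subtype.ext (Quaternion.im_smul (a := q) c)

theorem finrank_ImH : Module.finrank ℝ ImH = 3 := by
  have hrange : LinearMap.range (QuaternionAlgebra.reₗ (-1 : ℝ) 0 (-1)) = ⊤ :=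
    LinearMap.range_eq_top.mpr fun r => ⟨(r : ℍ[ℝ]), rfl⟩
  have := LinearMap.finrank_range_add_finrank_ker (QuaternionAlgebra.reₗ (-1 : ℝ) 0 (-1))
  rw [hrange, finrank_top, Module.finrank_self, QuaternionAlgebra.finrank_eq_four] at this
  exact Nat.add_left_cancel (this.trans rfl : 1 + _ = 1 + 3)

def Quaternion.mulLeftRightIsometry {a b : ℍ[ℝ]} (ha : ‖a‖ = 1) (hb : ‖b‖ = 1) :
    ℍ[ℝ] ≃ₗᵢ[ℝ] ℍ[ℝ] :=
  LinearIsometry.toLinearIsometryEquiv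
    { LinearMap.mulLeftRight ℝ (a, b) with
      norm_map' := fun x => by simp [norm_mul, ha, hb] } rfl

@[simp]
theorem Quaternion.mulLeftRightIsometry_apply {a b : ℍ[ℝ]} (ha : ‖a‖ = 1) (hb : ‖b‖ = 1)
    (x : ℍ[ℝ]) : Quaternion.mulLeftRightIsometry ha hb x = a * x * b := rfl

def sandwichIsometry (v : Sp1) : ImH ≃ₗᵢ[ℝ] ImH :=
  LinearIsometry.toLinearIsometryEquiv
    { (LinearMap.mulLeftRight ℝ ((v : ℍ[ℝ]), star (v : ℍ[ℝ]))).restrict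
        (p := ImH) (q := ImH) fun t ht => sandwich_re _ t ht with
      norm_map' := fun t => by
        change ‖(v : ℍ[ℝ]) * t * star (v : ℍ[ℝ])‖ = ‖(t : ℍ[ℝ])‖
        simp [norm_mul] } rfl

theorem sandwichIsometry_apply (v : Sp1) (t : ImH) : sandwichIsometry v t = sandwich v t := rfl

instance : IsProbabilityMeasure sphereMeasure where
  measure_univ := by
    rw [sphereMeasure, Measure.smul_apply, smul_eq_mul]
    exact ENNReal.inv_mul_cancel (Measure.measure_univ_ne_zero.mpr (Measure.toSphere_ne_zero _))
      (measure_ne_top _ _)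

-- Without this shortcut, instance search for `SigmaFinite` of products containing
-- `sphereMeasure` fails.
instance : SigmaFinite sphereMeasure := inferInstance

theorem measurePreserving_sphereMap_sphereMeasure (e : ℍ[ℝ] ≃ₗᵢ[ℝ] ℍ[ℝ]) :
    MeasurePreserving e.sphereMap sphereMeasure sphereMeasure :=
  (Measure.measurePreserving_sphereMap_toSphere e e.measurePreserving).smul_measure _

theorem measurePreserving_sp1Mul_left (u : Sp1) :
    MeasurePreserving (sp1Mul u) sphereMeasure sphereMeasure := by
  convert measurePreserving_sphereMap_sphereMeasure
    (Quaternion.mulLeftRightIsometry (Sp1.norm_eq u) norm_one) using 1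
  funext w
  exact Subtype.ext (mul_one _).symm

theorem measurePreserving_sp1Mul_right (u : Sp1) :
    MeasurePreserving (sp1Mul · u) sphereMeasure sphereMeasure := by
  convert measurePreserving_sphereMap_sphereMeasure
    (Quaternion.mulLeftRightIsometry norm_one (Sp1.norm_eq u)) using 1
  funext w
  exact Subtype.ext (congrArg (· * (u : ℍ[ℝ])) (one_mul (w : ℍ[ℝ])).symm)

def measureP (n : ℤ) : Measure P :=
  (volume : Measure ℍ[ℝ]).prod ((volume : Measure ImH).prod
    ((rhoMeasure n).prod (sphereMeasure.prod sphereMeasure)))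

theorem measurePreserving_Pmul_left (g : P) (n : ℤ) :
    MeasurePreserving (Pmul g) (measureP n)
      (ENNReal.ofReal ((g.2.2.1 : ℝ) ^ (-(n + 6))) • measureP n) := by
  obtain ⟨x₀, t₀, ρ, u, v⟩ := g
  have hρ : (0 : ℝ) < ρ := ρ.2
  have rotate : MeasurePreserving
      (fun x => Real.sqrt ρ • Quaternion.mulLeftRightIsometry (Sp1.norm_eq u)
        (by rw [Quaternion.norm_star, Sp1.norm_eq v]) x) volume
      (ENNReal.ofReal (ρ ^ (-2 : ℤ)) • volume) := by
    convert MeasurePreserving.smul_linearIsometryEquiv _ (Real.sqrt_pos.mpr hρ) using 4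
    rw [Quaternion.finrank_eq_four, show 4 = 2 * 2 from rfl, pow_mul, Real.sq_sqrt hρ.le,
      zpow_neg, zpow_ofNat]
  have conjugate : MeasurePreserving (fun t => (ρ : ℝ) • sandwichIsometry v t)
      (volume : Measure ImH) (ENNReal.ofReal (ρ ^ (-3 : ℤ)) • volume) := by
    convert MeasurePreserving.smul_linearIsometryEquiv (sandwichIsometry v) hρ using 4
    rw [finrank_ImH, zpow_neg, zpow_ofNat]
  have scale := (measurePreserving_rhoMeasure_mul_left n ρ).prod
    ((measurePreserving_sp1Mul_left u).prod (measurePreserving_sp1Mul_left v))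
  rw [Measure.prod_smul_left] at scale
  have dilate := rotate.prodMap_smul (conjugate.prodMap_smul scale)
  have translate := measurePreserving_add_shear (volume : Measure ℍ[ℝ]) (volume : Measure ImH)
    ((rhoMeasure n).prod (sphereMeasure.prod sphereMeasure)) (a := fun _ => x₀)
    (b := fun _ x => t₀ - (2 : ℝ) • imPart (star x * x₀)) measurable_const (by fun_prop)
  convert (translate.smul_measure _).comp dilate using 1
  · funext ⟨x, t, r, a, b⟩
    have hstar : star (Real.sqrt ρ • ((u : ℍ[ℝ]) * x * star (v : ℍ[ℝ]))) * x₀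
        = Real.sqrt ρ • ((v : ℍ[ℝ]) * star x * star (u : ℍ[ℝ]) * x₀) := by
      simp only [Quaternion.star_smul, star_mul, star_star, smul_mul_assoc, mul_assoc]
    refine Prod.ext (add_comm _ _) (Prod.ext ?_ rfl)
    simp only [Pmul, Function.comp, Prod.map, Quaternion.mulLeftRightIsometry_apply,
      sandwichIsometry_apply, hstar, imPart_smul, smul_smul]
    abel
  · rfl
  · rw [← ENNReal.ofReal_mul (by positivity), ← ENNReal.ofReal_mul (by positivity),
      ← zpow_add₀ hρ.ne', ← zpow_add₀ hρ.ne']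
    congr 3
    ring

theorem measurePreserving_Pmul_right (g : P) (n : ℤ) :
    MeasurePreserving (Pmul · g) (measureP n)
      (ENNReal.ofReal ((g.2.2.1 : ℝ) ^ (-(n + 1))) • measureP n) := by
  obtain ⟨x₀, t₀, ρ, u, v⟩ := g
  have scale : MeasurePreserving (Prod.map (· * ρ) (Prod.map (sp1Mul · u) (sp1Mul · v)))
      ((rhoMeasure n).prod (sphereMeasure.prod sphereMeasure))
      (ENNReal.ofReal ((ρ : ℝ) ^ (-(n + 1))) •
        (rhoMeasure n).prod (sphereMeasure.prod sphereMeasure)) := by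
    have := (measurePreserving_rhoMeasure_mul_left n ρ).prod
      ((measurePreserving_sp1Mul_right u).prod (measurePreserving_sp1Mul_right v))
    rwa [Measure.prod_smul_left, funext fun r => mul_comm ρ r] at this
  have dilate := (MeasurePreserving.id (volume : Measure ℍ[ℝ])).prod
    ((MeasurePreserving.id (volume : Measure ImH)).prod scale)
  rw [Measure.prod_smul_right, Measure.prod_smul_right] at dilate
  have translate := measurePreserving_add_shear (volume : Measure ℍ[ℝ]) (volume : Measure ImH)
    ((rhoMeasure n).prod (sphereMeasure.prod sphereMeasure))
    (a := fun w => Real.sqrt w.1 • ((w.2.1 : ℍ[ℝ]) * x₀ * star (w.2.2 : ℍ[ℝ])))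
    (b := fun w x => (w.1 : ℝ) • sandwich w.2.2 t₀
      - (2 * Real.sqrt w.1) • imPart ((w.2.2 : ℍ[ℝ]) * star x₀ * star (w.2.1 : ℍ[ℝ]) * x))
    (by fun_prop) (by fun_prop)
  convert dilate.comp translate using 1
  · funext ⟨x, t, r, a, b⟩
    exact Prod.ext rfl (Prod.ext (add_sub_assoc _ _ _) rfl)
  all_goals rfl

theorem exists_measureP_ne_zero_ne_top (n : ℤ) : ∃ s, measureP n s ≠ 0 ∧ measureP n s ≠ ∞ := by
  obtain ⟨h0, htop⟩ := rhoMeasure_Icc_ne_zero_ne_top n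
  refine ⟨ball 0 1 ×ˢ ball 0 1 ×ˢ (Subtype.val ⁻¹' Icc 1 2) ×ˢ univ, ?_⟩
  simp only [measureP, Measure.prod_prod, measure_univ, mul_one]
  exact ⟨mul_ne_zero (measure_ball_pos _ _ one_pos).ne'
      (mul_ne_zero (measure_ball_pos _ _ one_pos).ne' h0),
    ENNReal.mul_ne_top measure_ball_lt_top.ne (ENNReal.mul_ne_top measure_ball_lt_top.ne htop)⟩

/-- `dm_l` is left-invariant, `dm_r` is right-invariant, and the two are
not proportional, so `𝐏` is non-unimodular. -/
theorem statement3 :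
    (∀ g : P, Measure.map (fun h => Pmul g h) ml = ml) ∧
    (∀ g : P, Measure.map (fun h => Pmul h g) mr = mr) ∧
    ¬ ∃ c : ENNReal, ml = c • mr := by
  rw [show ml = measureP (-6) from rfl, show mr = measureP (-1) from rfl]
  refine ⟨fun g => ?_, fun g => ?_, ?_⟩
  · simpa using (measurePreserving_Pmul_left g (-6)).map_eq
  · simpa using (measurePreserving_Pmul_right g (-1)).map_eq
  rintro ⟨c, hc⟩
  let δ : P := (0, 0, ⟨2, two_pos⟩, sp1One, sp1One)
  have hδ : measureP (-6) = ENNReal.ofReal (2 ^ (-5 : ℤ)) • measureP (-6) := calc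
    measureP (-6) = Measure.map (Pmul δ) (measureP (-6)) := by
      simpa using (measurePreserving_Pmul_left δ (-6)).map_eq.symm
    _ = ENNReal.ofReal (2 ^ (-5 : ℤ)) • measureP (-6) := by
      rw [hc, Measure.map_smul, (measurePreserving_Pmul_left δ (-1)).map_eq, smul_comm]
      norm_num
  obtain ⟨s, hs0, hstop⟩ := exists_measureP_ne_zero_ne_top (-6)
  have h1 : ENNReal.ofReal (2 ^ (-5 : ℤ)) = 1 := by
    have := congrArg (· s) hδ
    simp only [Measure.smul_apply, smul_eq_mul] at this
    exact (ENNReal.mul_eq_right hs0 hstop).mp this.symm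
  norm_num at h1
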